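/- arXiv:2604.07153 — 4 statements merged into one kernel-verified Lean document; each statement's English description precedes it below -/
import Mathlib

section
/- McDiarmid's inequality: let q : Z_1 × ⋯ × Z_n → ℝ satisfy the bounded differences property with constants c_1,…,c_n, and let Z_1,…,Z_n be independent random variables. Then for all ε > 0, P(q(Z_1,…,Z_n) − E[q(Z_1,…,Z_n)] > ε) ≤ exp(−2ε² / Σ_i c_i²). -/
/-!
Split off the first coordinate, `z = (x, y)`, and let `g y = ∫ f (x, y) dx`. Then
`f - E f = (f - g) + (g - E f)`. For fixed `y`, the bounded differences property confines
`x ↦ f (x, y)` to an interval of length `c₀`, so by Hoeffding's lemma its centred version is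
sub-Gaussian with parameter `c₀² / 4`; averaging over `x` preserves bounded differences, so by
induction `g - E f` is sub-Gaussian with parameter `∑_{i ≥ 1} cᵢ² / 4`. Integrating out `x` first
shows that these parameters add. The Chernoff bound for a sub-Gaussian variable with parameter
`∑ cᵢ² / 4` is exactly `exp (-2ε² / ∑ cᵢ²)`, and independence makes the law of `(Z₁, …, Zₙ)` the
product of the marginals.
-/

open MeasureTheory ProbabilityTheory

open Real Set Function
open scoped NNReal

lemma exists_forall_mem_Icc_of_sub_le {α : Type*} {g : α → ℝ} {c : ℝ}
    (h : ∀ x x', g x - g x' ≤ c) : ∃ a, ∀ x, g x ∈ Icc a (a + c) := by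
  refine ⟨sInf (range g), fun x => ⟨csInf_le ⟨g x - c, ?_⟩ (mem_range_self x), ?_⟩⟩
  · rintro _ ⟨x', rfl⟩
    linarith [h x x']
  · have : g x - c ≤ sInf (range g) :=
      le_csInf (range_nonempty_iff_nonempty.mpr ⟨x⟩) fun _ ⟨x', hx'⟩ => hx' ▸ by linarith [h x x']
    linarith

namespace ProbabilityTheory.HasSubgaussianMGF

variable {α β : Type*} [MeasurableSpace α] [MeasurableSpace β] {μ : Measure α} {ν : Measure β}
  [SFinite μ] [SFinite ν]

lemma prod_of_sections {F : α × β → ℝ} {G : β → ℝ} {cx cy : ℝ≥0} (hF : Measurable F)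
    (hsec : ∀ y, HasSubgaussianMGF (fun x => F (x, y) - G y) cx μ)
    (hG : HasSubgaussianMGF G cy ν) : HasSubgaussianMGF F (cx + cy) (μ.prod ν) := by
  have hsplit : ∀ t x y, exp (t * F (x, y)) = exp (t * (F (x, y) - G y)) * exp (t * G y) :=
    fun t x y => by rw [← exp_add]; ring_nf
  have hsection_le : ∀ t y, ∫ x, exp (t * F (x, y)) ∂μ ≤ exp (cx * t ^ 2 / 2) * exp (t * G y) := by
    intro t y
    simp only [hsplit t _ y, integral_mul_const]
    gcongr
    exact (hsec y).mgf_le t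
  have hint : ∀ t, Integrable (fun p => exp (t * F p)) (μ.prod ν) := by
    intro t
    have hmeas : Measurable fun p => exp (t * F p) := by fun_prop
    refine (integrable_prod_iff' hmeas.aestronglyMeasurable).mpr ⟨ae_of_all _ fun y => ?_, ?_⟩
    · simpa only [hsplit t _ y] using ((hsec y).integrable_exp_mul t).mul_const (exp (t * G y))
    · refine ((hG.integrable_exp_mul t).const_mul (exp (cx * t ^ 2 / 2))).mono'
        hmeas.norm.stronglyMeasurable.integral_prod_left'.aestronglyMeasurable
        (ae_of_all _ fun y => ?_)
      simp only [norm_eq_abs, abs_exp]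
      rw [abs_of_nonneg (integral_nonneg fun _ => (exp_pos _).le)]
      exact hsection_le t y
  refine ⟨hint, fun t => ?_⟩
  calc mgf F (μ.prod ν) t = ∫ y, ∫ x, exp (t * F (x, y)) ∂μ ∂ν := integral_prod_symm _ (hint t)
    _ ≤ ∫ y, exp (cx * t ^ 2 / 2) * exp (t * G y) ∂ν :=
      integral_mono_of_nonneg (ae_of_all _ fun y => integral_nonneg fun _ => (exp_pos _).le)
        ((hG.integrable_exp_mul t).const_mul _) (ae_of_all _ (hsection_le t))
    _ = exp (cx * t ^ 2 / 2) * mgf G ν t := integral_const_mul _ _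
    _ ≤ exp (cx * t ^ 2 / 2) * exp (cy * t ^ 2 / 2) := by gcongr; exact hG.mgf_le t
    _ = exp (↑(cx + cy) * t ^ 2 / 2) := by rw [← exp_add]; push_cast; ring_nf

end ProbabilityTheory.HasSubgaussianMGF

def HasBoundedDifferences {ι : Type*} [DecidableEq ι] {ζ : ι → Type*} (f : (∀ i, ζ i) → ℝ)
    (c : ι → ℝ) : Prop :=
  ∀ (i : ι) (z : ∀ j, ζ j) (z' : ζ i), |f (update z i z') - f z| ≤ c i

namespace HasBoundedDifferences

variable {ι : Type*} [DecidableEq ι] {ζ : ι → Type*} {f : (∀ i, ζ i) → ℝ} {c : ι → ℝ}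

lemma abs_sub_le_sum (hf : HasBoundedDifferences f c) (s : Finset ι) {z z' : ∀ i, ζ i}
    (h : ∀ j ∉ s, z j = z' j) : |f z' - f z| ≤ ∑ i ∈ s, c i := by
  induction s using Finset.induction generalizing z' with
  | empty => simp [funext fun j => h j (Finset.notMem_empty j)]
  | @insert i s hi ih =>
    calc |f z' - f z| ≤ |f z' - f (update z' i (z i))| + |f (update z' i (z i)) - f z| :=
          abs_sub_le _ _ _
      _ ≤ c i + ∑ j ∈ s, c j := by
        gcongr
        · simpa using hf i (update z' i (z i)) (z' i)
        · refine ih fun j hj => ?_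
          by_cases hji : j = i
          · subst hji; simp
          · rw [update_of_ne hji]; exact h j (by simp [hji, hj])
      _ = ∑ j ∈ insert i s, c j := (Finset.sum_insert hi).symm

lemma abs_sub_le_sum_univ [Fintype ι] (hf : HasBoundedDifferences f c) (z z' : ∀ i, ζ i) :
    |f z' - f z| ≤ ∑ i, c i :=
  hf.abs_sub_le_sum _ fun j hj => absurd (Finset.mem_univ j) hj

lemma integrable [Fintype ι] [∀ i, MeasurableSpace (ζ i)] {μ : Measure (∀ i, ζ i)}
    [IsFiniteMeasure μ] (hf : HasBoundedDifferences f c) (hmeas : Measurable f) :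
    Integrable f μ := by
  cases isEmpty_or_nonempty (∀ i, ζ i) with
  | inl _ => exact .of_isEmpty
  | inr h =>
    obtain ⟨z₀⟩ := h
    refine .of_mem_Icc (f z₀ - ∑ i, c i) (f z₀ + ∑ i, c i) hmeas.aemeasurable
      (ae_of_all _ fun z => ?_)
    have := abs_le.mp (hf.abs_sub_le_sum_univ z₀ z)
    constructor <;> linarith

lemma integral {α : Type*} [MeasurableSpace α] {μ : Measure α} [IsProbabilityMeasure μ]
    {F : α → (∀ i, ζ i) → ℝ} (hF : ∀ x, HasBoundedDifferences (F x) c)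
    (hint : ∀ z, Integrable (fun x => F x z) μ) :
    HasBoundedDifferences (fun z => ∫ x, F x z ∂μ) c := by
  intro i z z'
  rw [← integral_sub (hint _) (hint _)]
  simpa using norm_integral_le_of_norm_le_const (μ := μ)
    (f := fun x => F x (update z i z') - F x z) (ae_of_all _ fun x => hF x i z z')

section Fin

variable {n : ℕ} {ζ : Fin (n + 1) → Type*} {f : (∀ i, ζ i) → ℝ} {c : Fin (n + 1) → ℝ}

lemma insertNth (hf : HasBoundedDifferences f c) (i : Fin (n + 1)) (x : ζ i) :
    HasBoundedDifferences (fun y => f (i.insertNth x y)) (fun j => c (i.succAbove j)) :=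
  fun j y v => by simpa only [Fin.insertNth_update] using hf (i.succAbove j) (i.insertNth x y) v

lemma insertNth_sub_insertNth_le (hf : HasBoundedDifferences f c) (i : Fin (n + 1))
    (y : ∀ j, ζ (i.succAbove j)) (x x' : ζ i) :
    f (i.insertNth x y) - f (i.insertNth x' y) ≤ c i := by
  simpa only [Fin.update_insertNth] using (le_abs_self _).trans (hf i (i.insertNth x' y) x)

lemma hasSubgaussianMGF_insertNth [∀ i, MeasurableSpace (ζ i)] (hf : HasBoundedDifferences f c)
    (hmeas : Measurable f) (i : Fin (n + 1)) (y : ∀ j, ζ (i.succAbove j)) {ν : Measure (ζ i)}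
    [IsProbabilityMeasure ν] :
    HasSubgaussianMGF (fun x => f (i.insertNth x y) - ∫ x', f (i.insertNth x' y) ∂ν)
      ((‖c i‖₊ / 2) ^ 2) ν := by
  obtain ⟨a, ha⟩ := exists_forall_mem_Icc_of_sub_le (hf.insertNth_sub_insertNth_le i y)
  have hmeas_x : Measurable fun x => f (i.insertNth x y) :=
    hmeas.comp ((MeasurableEquiv.piFinSuccAbove ζ i).symm.measurable.comp measurable_prodMk_right)
  simpa only [add_sub_cancel_left] using
    hasSubgaussianMGF_of_mem_Icc hmeas_x.aemeasurable (ae_of_all _ ha)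

end Fin

end HasBoundedDifferences

theorem HasBoundedDifferences.hasSubgaussianMGF_pi {n : ℕ} {ζ : Fin n → Type*}
    [∀ i, MeasurableSpace (ζ i)] {μ : ∀ i, Measure (ζ i)} [∀ i, IsProbabilityMeasure (μ i)]
    {f : (∀ i, ζ i) → ℝ} {c : Fin n → ℝ} (hf : HasBoundedDifferences f c) (hmeas : Measurable f) :
    HasSubgaussianMGF (fun z => f z - ∫ z', f z' ∂Measure.pi μ) (∑ i, (‖c i‖₊ / 2) ^ 2)
      (Measure.pi μ) := by
  induction n with
  | zero =>
    have hzero : ∀ z, f z - ∫ z', f z' ∂Measure.pi μ = 0 := fun z => by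
      simp [integral_unique, Subsingleton.elim z default]
    simp [hzero, HasSubgaussianMGF.fun_zero]
  | succ n ih =>
    set e := MeasurableEquiv.piFinSuccAbove ζ 0
    set ν := Measure.pi fun j => μ (Fin.succAbove 0 j)
    set M := ∫ z, f z ∂Measure.pi μ
    set g := fun y => ∫ x, f (e.symm (x, y)) ∂μ 0
    have he : MeasurePreserving e (Measure.pi μ) ((μ 0).prod ν) :=
      measurePreserving_piFinSuccAbove μ 0
    have hF : Measurable (f ∘ e.symm) := hmeas.comp e.symm.measurable
    have hhoeffding : ∀ y, HasSubgaussianMGF (fun x => f (e.symm (x, y)) - g y)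
        ((‖c 0‖₊ / 2) ^ 2) (μ 0) := fun y => hf.hasSubgaussianMGF_insertNth hmeas 0 y
    have hsec_int : ∀ y, Integrable (fun x => f (e.symm (x, y))) (μ 0) := fun y =>
      integrable_add_const_iff.mp (hhoeffding y).integrable
    have hg_mean : ∫ y, g y ∂ν = M := by
      have hint : Integrable (f ∘ e.symm) ((μ 0).prod ν) :=
        ((he.symm e).integrable_comp_emb e.symm.measurableEmbedding).mpr (hf.integrable hmeas)
      calc ∫ y, g y ∂ν = ∫ p, (f ∘ e.symm) p ∂((μ 0).prod ν) := (integral_prod_symm _ hint).symm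
        _ = M := (he.symm e).integral_comp' f
    have hG : HasSubgaussianMGF (fun y => g y - M) (∑ j, (‖c (Fin.succAbove 0 j)‖₊ / 2) ^ 2) ν :=
      hg_mean ▸ ih (HasBoundedDifferences.integral (fun x => hf.insertNth 0 x) hsec_int)
        hF.stronglyMeasurable.integral_prod_left'.measurable
    have hsec : ∀ y, HasSubgaussianMGF (fun x => (f (e.symm (x, y)) - M) - (g y - M))
        ((‖c 0‖₊ / 2) ^ 2) (μ 0) := fun y => by
      simpa only [sub_sub_sub_cancel_right] using hhoeffding y
    have hprod := HasSubgaussianMGF.prod_of_sections (hF.sub_const M) hsec hG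
    rw [← he.map_eq] at hprod
    have hcomp : (fun p => f (e.symm p) - M) ∘ e = fun z => f z - M :=
      funext fun z => by rw [comp_apply, e.symm_apply_apply]
    rw [Fin.sum_univ_succAbove _ 0, ← hcomp]
    exact hprod.of_map e.measurable.aemeasurable

theorem mcdiarmid_inequality_general
    {Ω : Type*} [MeasurableSpace Ω] (μ : Measure Ω) [IsProbabilityMeasure μ]
    (n : ℕ) (ζ : Fin n → Type*) [∀ i, MeasurableSpace (ζ i)]
    (q : (∀ i, ζ i) → ℝ) (c : Fin n → ℝ)
    (Z : ∀ i, Ω → ζ i)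
    (hZmeas : ∀ i, Measurable (Z i))
    (hqmeas : Measurable q)
    (hindep : iIndepFun Z μ)
    (hbdd : ∀ (i : Fin n) (z : ∀ j, ζ j) (z' : ζ i),
      |q (Function.update z i z') - q z| ≤ c i)
    (ε : ℝ) (hε : 0 < ε) :
    μ {ω | q (fun i => Z i ω) - (∫ ω', q (fun i => Z i ω') ∂μ) > ε} ≤
      ENNReal.ofReal (Real.exp (-2 * ε ^ 2 / ∑ i, c i ^ 2)) := by
  have hZ : Measurable fun ω i => Z i ω := measurable_pi_iff.mpr hZmeas
  have hlaw : μ.map (fun ω i => Z i ω) = Measure.pi fun i => μ.map (Z i) :=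
    hindep.map_fun_eq_pi_map fun i => (hZmeas i).aemeasurable
  have := fun i => Measure.isProbabilityMeasure_map (μ := μ) (hZmeas i).aemeasurable
  have hsg := HasBoundedDifferences.hasSubgaussianMGF_pi (μ := fun i => μ.map (Z i)) hbdd hqmeas
  rw [← hlaw, integral_map hZ.aemeasurable hqmeas.aestronglyMeasurable] at hsg
  have htail := (hsg.of_map hZ.aemeasurable).measure_ge_le hε.le
  have hexp : -ε ^ 2 / (2 * ((∑ i, (‖c i‖₊ / 2) ^ 2 : ℝ≥0) : ℝ)) = -2 * ε ^ 2 / ∑ i, c i ^ 2 := by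
    push_cast
    simp only [norm_eq_abs, div_pow, sq_abs, ← Finset.sum_div]
    ring
  calc μ {ω | q (fun i => Z i ω) - (∫ ω', q (fun i => Z i ω') ∂μ) > ε}
      ≤ μ {ω | ε ≤ q (fun i => Z i ω) - ∫ ω', q (fun i => Z i ω') ∂μ} :=
        measure_mono fun _ h => le_of_lt (α := ℝ) h
    _ = ENNReal.ofReal (μ.real {ω | ε ≤ q (fun i => Z i ω) - ∫ ω', q (fun i => Z i ω') ∂μ}) :=
        (ofReal_measureReal (measure_ne_top _ _)).symm
    _ ≤ ENNReal.ofReal (Real.exp (-2 * ε ^ 2 / ∑ i, c i ^ 2)) :=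
        ENNReal.ofReal_le_ofReal (hexp ▸ htail)

/-- McDiarmid's inequality: if `q : Z₁ × ⋯ × Zₙ → ℝ` satisfies the bounded
differences property with constants `c₁,…,cₙ` and `Z₁,…,Zₙ` are independent random
variables, then for all `ε > 0`,
`P(q(Z₁,…,Zₙ) − E[q(Z₁,…,Zₙ)] > ε) ≤ exp(−2ε² / ∑ᵢ cᵢ²)`. -/
theorem mcdiarmid_inequality
    {Ω : Type*} [MeasurableSpace Ω] (μ : Measure Ω) [IsProbabilityMeasure μ]
    (n : ℕ) (ζ : Fin n → Type*) [∀ i, MeasurableSpace (ζ i)]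
    (q : (∀ i, ζ i) → ℝ) (c : Fin n → ℝ)
    (Z : ∀ i, Ω → ζ i)
    (hZmeas : ∀ i, Measurable (Z i))
    (hqmeas : Measurable q)
    (hindep : iIndepFun Z μ)
    (hbdd : ∀ (i : Fin n) (z : ∀ j, ζ j) (z' : ζ i),
      |q (Function.update z i z') - q z| ≤ c i)
    (hint : Integrable (fun ω => q (fun i => Z i ω)) μ)
    (ε : ℝ) (hε : 0 < ε) :
    μ {ω | q (fun i => Z i ω) - (∫ ω', q (fun i => Z i ω') ∂μ) > ε} ≤
      ENNReal.ofReal (Real.exp (-2 * ε ^ 2 / ∑ i, c i ^ 2)) :=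
  mcdiarmid_inequality_general μ n ζ q c Z hZmeas hqmeas hindep hbdd ε hε
end

section
/- For a bounded kernel with bound M_k and unit vector f, if X_1,…,X_n, Y_1,…,Y_n are i.i.d. from P with within-group covariance operator Σ having eigenpair (λ, f), then for all δ > 0, P((1/n) Σ_{i=1}^n ⟨f, φ(X_i) − φ(Y_i)⟩² − 2λ < −8 M_k √(δ/n)) ≤ e^{−δ}. -/
open MeasureTheory ProbabilityTheory
open scoped RealInnerProductSpace

/-- The rank-one operator `f ⊗ g : h ↦ ⟪g, h⟫ f`. -/
noncomputable def rankOne {H : Type*} [NormedAddCommGroup H] [InnerProductSpace ℝ H]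
    (f g : H) : H →L[ℝ] H :=
  (innerSL ℝ g).smulRight f

/-!
Put `g = ⟪f, φ ·⟫`. Testing the eigen-equation `Σ f = λ f` against `f` gives `λ = Var_P g`.
The squared differences `Dᵢ = (g Xᵢ - g Yᵢ)²` are independent, have mean `2 Var_P g` because
`Xᵢ` and `Yᵢ` are independent copies, and lie in `[0, 4 M_k]` because `g² ≤ ‖φ‖² ≤ M_k`.
Hoeffding's inequality then bounds the lower tail of their mean at distance `t` by
`exp (-n t² / (8 M_k²))`, which is `e^{-8δ}` for `t = 8 M_k √(δ/n)`. When `M_k = 0` this bound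
is void, but then `g = 0` and the event is empty.
-/

namespace ProbabilityTheory

variable {Ω : Type*} [MeasurableSpace Ω] {μ : Measure Ω}

theorem iIndepFun.inl_prodMk_inr {β ι : Type*} [MeasurableSpace β] [Fintype ι]
    {V : ι ⊕ ι → Ω → β} (hV : iIndepFun V μ) (hVm : ∀ j, Measurable (V j)) :
    iIndepFun (fun i ω ↦ (V (.inl i) ω, V (.inr i) ω)) μ := by
  have := hV.isProbabilityMeasure
  have hlaw (i : ι) : μ.map (fun ω ↦ (V (.inl i) ω, V (.inr i) ω))
      = (μ.map (V (.inl i))).prod (μ.map (V (.inr i))) :=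
    (indepFun_iff_map_prod_eq_prod_map_map (hVm _).aemeasurable (hVm _).aemeasurable).1
      (hV.indepFun Sum.inl_ne_inr)
  have hpair : (fun ω i ↦ (V (.inl i) ω, V (.inr i) ω))
      = (MeasurableEquiv.arrowProdEquivProdArrow β β ι).symm ∘
        MeasurableEquiv.sumPiEquivProdPi (fun _ ↦ β) ∘ fun ω j ↦ V j ω := rfl
  rw [iIndepFun_iff_map_fun_eq_pi_map fun i ↦ ((hVm _).prodMk (hVm _)).aemeasurable, hpair,
    ← Measure.map_map (by fun_prop) (by fun_prop), ← Measure.map_map (by fun_prop) (by fun_prop),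
    hV.map_fun_eq_pi_map fun j ↦ (hVm j).aemeasurable,
    (measurePreserving_sumPiEquivProdPi _).map_eq]
  simp_rw [hlaw]
  exact ((measurePreserving_arrowProdEquivProdArrow β β ι _ _).symm _).map_eq

theorem measureReal_mean_lt_sub_le [IsProbabilityMeasure μ] {ι : Type*} [Fintype ι]
    {X : ι → Ω → ℝ} (hX : iIndepFun X μ) (hXm : ∀ i, AEMeasurable (X i) μ) {a b m : ℝ}
    (hXab : ∀ i, ∀ᵐ ω ∂μ, X i ω ∈ Set.Icc a b) (hXmean : ∀ i, μ[X i] = m) {t : ℝ}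
    (ht : 0 ≤ t) :
    μ.real {ω | (Fintype.card ι : ℝ)⁻¹ * ∑ i, X i ω - m < -t} ≤
      Real.exp (-2 * Fintype.card ι * t ^ 2 / (b - a) ^ 2) := by
  rcases isEmpty_or_nonempty ι with hι | hι
  · simp
  set N : ℝ := (Fintype.card ι : ℝ)
  have hN : 0 < N := by positivity
  have hsubG (i : ι) : HasSubgaussianMGF (fun ω ↦ m - X i ω) ((‖b - a‖₊ / 2) ^ 2) μ := by
    have h := hasSubgaussianMGF_of_mem_Icc (hXm i).neg <| (hXab i).mono fun ω hω ↦
      (⟨neg_le_neg hω.2, neg_le_neg hω.1⟩ : -X i ω ∈ Set.Icc (-b) (-a))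
    rw [show -a - -b = b - a by ring] at h
    refine h.congr (ae_of_all _ fun ω ↦ ?_)
    simp [integral_neg, hXmean i]
    ring
  have hindep : iIndepFun (fun i ω ↦ m - X i ω) μ :=
    hX.comp (fun _ x ↦ m - x) fun _ ↦ measurable_const.sub measurable_id
  have hsub : {ω | N⁻¹ * ∑ i, X i ω - m < -t} ⊆ {ω | N * t ≤ ∑ i, (m - X i ω)} := by
    intro ω hω
    simp only [Set.mem_ofPred_eq, Finset.sum_sub_distrib, Finset.sum_const, Finset.card_univ,
      nsmul_eq_mul] at hω ⊢
    rw [inv_mul_eq_div, sub_lt_iff_lt_add, div_lt_iff₀ hN] at hω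
    nlinarith
  calc μ.real {ω | N⁻¹ * ∑ i, X i ω - m < -t}
      ≤ μ.real {ω | N * t ≤ ∑ i, (m - X i ω)} := measureReal_mono hsub
    _ ≤ Real.exp (-(N * t) ^ 2 / (2 * ∑ _i : ι, ((‖b - a‖₊ / 2) ^ 2 : NNReal))) :=
      HasSubgaussianMGF.measure_sum_ge_le_of_iIndepFun hindep (fun i _ ↦ hsubG i) (by positivity)
    _ = Real.exp (-2 * N * t ^ 2 / (b - a) ^ 2) := by
      congr 1
      simp only [Finset.sum_const, Finset.card_univ, nsmul_eq_mul]
      push_cast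
      rw [Real.norm_eq_abs, div_pow, sq_abs]
      rcases eq_or_ne (b - a) 0 with hab | hab
      · simp [hab]
      · field_simp
        ring

variable [IsProbabilityMeasure μ] {Z : Type*} [MeasurableSpace Z] {P : Measure Z}

theorem integral_sq_sub_comp_eq_two_mul_variance {X Y : Ω → Z} (hX : AEMeasurable X μ)
    (hY : AEMeasurable Y μ) (hXY : IndepFun X Y μ) (hXlaw : μ.map X = P) (hYlaw : μ.map Y = P)
    {g : Z → ℝ} (hg : MemLp g 2 P) :
    ∫ ω, (g (X ω) - g (Y ω)) ^ 2 ∂μ = 2 * Var[g; P] := by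
  have hgX : MemLp (g ∘ X) 2 μ := (hXlaw ▸ hg).comp_of_map hX
  have hgY : MemLp (g ∘ Y) 2 μ := (hYlaw ▸ hg).comp_of_map hY
  have hindep : IndepFun (g ∘ X) (-(g ∘ Y)) μ :=
    (hXY.comp₀ hX hY (hXlaw ▸ hg.aestronglyMeasurable.aemeasurable)
      (hYlaw ▸ hg.aestronglyMeasurable.aemeasurable)).comp measurable_id measurable_neg
  have hmean : μ[g ∘ X + -(g ∘ Y)] = 0 := by
    rw [integral_add' (hgX.integrable one_le_two) (hgY.integrable one_le_two).neg, integral_neg']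
    simp only [Function.comp_apply]
    rw [← integral_map hX (hXlaw ▸ hg.aestronglyMeasurable),
      ← integral_map hY (hYlaw ▸ hg.aestronglyMeasurable), hXlaw, hYlaw, add_neg_cancel]
  calc ∫ ω, (g (X ω) - g (Y ω)) ^ 2 ∂μ = Var[g ∘ X + -(g ∘ Y); μ] := by
        rw [variance_of_integral_eq_zero (hgX.aemeasurable.add hgY.aemeasurable.neg) hmean]
        simp [sub_eq_add_neg]
    _ = Var[g ∘ X; μ] + Var[g ∘ Y; μ] := by
        rw [hindep.variance_add hgX hgY.neg, variance_neg]
    _ = 2 * Var[g; P] := by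
        rw [← variance_map (hXlaw ▸ hg.aestronglyMeasurable.aemeasurable) hX,
          ← variance_map (hYlaw ▸ hg.aestronglyMeasurable.aemeasurable) hY, hXlaw, hYlaw]
        ring

theorem measureReal_mean_sq_sub_lt_le [IsFiniteMeasure P] {ι : Type*} [Fintype ι]
    {V : ι ⊕ ι → Ω → Z} (hVm : ∀ j, Measurable (V j)) (hV : iIndepFun V μ)
    (hVlaw : ∀ j, μ.map (V j) = P) {g : Z → ℝ} (hg : AEMeasurable g P) {M : ℝ}
    (hgM : ∀ᵐ z ∂P, g z ^ 2 ≤ M) {t : ℝ} (ht : 0 ≤ t) :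
    μ.real {ω | (Fintype.card ι : ℝ)⁻¹ * ∑ i, (g (V (.inl i) ω) - g (V (.inr i) ω)) ^ 2
        - 2 * Var[g; P] < -t} ≤ Real.exp (-(Fintype.card ι) * t ^ 2 / (8 * M ^ 2)) := by
  have hgVm (j : ι ⊕ ι) : AEMeasurable (fun ω ↦ g (V j ω)) μ :=
    ((hVlaw j).symm ▸ hg).comp_aemeasurable (hVm j).aemeasurable
  have hgVM (j : ι ⊕ ι) : ∀ᵐ ω ∂μ, g (V j ω) ^ 2 ≤ M :=
    ae_of_ae_map (hVm j).aemeasurable ((hVlaw j).symm ▸ hgM)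
  have hpair (i : ι) : μ.map (fun ω ↦ (V (.inl i) ω, V (.inr i) ω)) = P.prod P := by
    rw [(indepFun_iff_map_prod_eq_prod_map_map (hVm _).aemeasurable (hVm _).aemeasurable).1
      (hV.indepFun Sum.inl_ne_inr), hVlaw, hVlaw]
  have hindep : iIndepFun (fun i ω ↦ (g (V (.inl i) ω) - g (V (.inr i) ω)) ^ 2) μ :=
    (hV.inl_prodMk_inr hVm).comp₀ (fun _ p ↦ (g p.1 - g p.2) ^ 2)
      (fun i ↦ ((hVm _).prodMk (hVm _)).aemeasurable)
      (fun i ↦ hpair i ▸ ((hg.comp_fst).sub hg.comp_snd).pow_const 2)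
  have hbound (i : ι) :
      ∀ᵐ ω ∂μ, (g (V (.inl i) ω) - g (V (.inr i) ω)) ^ 2 ∈ Set.Icc 0 (4 * M) := by
    filter_upwards [hgVM (.inl i), hgVM (.inr i)] with ω h₁ h₂
    exact ⟨sq_nonneg _, by nlinarith [sq_nonneg (g (V (.inl i) ω) + g (V (.inr i) ω))]⟩
  have hmean (i : ι) : ∫ ω, (g (V (.inl i) ω) - g (V (.inr i) ω)) ^ 2 ∂μ = 2 * Var[g; P] :=
    integral_sq_sub_comp_eq_two_mul_variance (hVm _).aemeasurable (hVm _).aemeasurable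
      (hV.indepFun Sum.inl_ne_inr) (hVlaw _) (hVlaw _)
      (.of_bound hg.aestronglyMeasurable √M (hgM.mono fun z hz ↦ Real.abs_le_sqrt hz))
  refine (measureReal_mean_lt_sub_le hindep (fun i ↦ ((hgVm _).sub (hgVm _)).pow_const 2)
    hbound hmean ht).trans_eq ?_
  congr 1
  ring

end ProbabilityTheory

section FeatureSpace

variable {Z H : Type*} [NormedAddCommGroup H] [InnerProductSpace ℝ H]

theorem inner_sq_le_of_kernel_le {φ : Z → H} {k : Z → Z → ℝ} {Mk : ℝ}
    (hrepr : ∀ z z', k z z' = ⟪φ z, φ z'⟫) (hbound : ∀ z, k z z ≤ Mk) {f : H} (hf : ‖f‖ = 1)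
    (z : Z) : ⟪f, φ z⟫ ^ 2 ≤ Mk := by
  calc ⟪f, φ z⟫ ^ 2 ≤ (‖f‖ * ‖φ z‖) ^ 2 := by
        rw [← sq_abs]; gcongr; exact abs_real_inner_le_norm f (φ z)
    _ = k z z := by rw [hf, one_mul, hrepr, real_inner_self_eq_norm_sq]
    _ ≤ Mk := hbound z

variable [MeasurableSpace Z] [CompleteSpace H]

noncomputable def featureCovarianceOperator (P : Measure Z) (φ : Z → H) : H →L[ℝ] H :=
  ∫ z, rankOne (φ z - ∫ z', φ z' ∂P) (φ z - ∫ z', φ z' ∂P) ∂P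

theorem inner_integral_rankOne_self_apply {P : Measure Z} {c : Z → H}
    (hc : Integrable (fun z ↦ rankOne (c z) (c z)) P) (f : H) :
    ⟪(∫ z, rankOne (c z) (c z) ∂P) f, f⟫ = ∫ z, ⟪c z, f⟫ ^ 2 ∂P := by
  have hcf : Integrable (fun z ↦ rankOne (c z) (c z) f) P :=
    (ContinuousLinearMap.apply ℝ H f).integrable_comp hc
  rw [ContinuousLinearMap.integral_apply hc, real_inner_comm, ← integral_inner hcf]
  congr 1 with z
  change ⟪f, ⟪c z, f⟫ • c z⟫ = _
  rw [real_inner_smul_right, real_inner_comm, sq]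

theorem eigenvalue_eq_variance_inner {P : Measure Z} [IsProbabilityMeasure P] {φ : Z → H}
    (hφ : Integrable φ P)
    (hcov : Integrable (fun z ↦ rankOne (φ z - ∫ z', φ z' ∂P) (φ z - ∫ z', φ z' ∂P)) P)
    {f : H} (hf : ‖f‖ = 1) {lam : ℝ} (heig : featureCovarianceOperator P φ f = lam • f) :
    lam = Var[fun z ↦ ⟪f, φ z⟫; P] := by
  have hg : AEMeasurable (fun z ↦ ⟪f, φ z⟫) P :=
    (aestronglyMeasurable_const.inner hφ.aestronglyMeasurable).aemeasurable
  calc lam = ⟪lam • f, f⟫ := by rw [real_inner_smul_left, real_inner_self_eq_norm_sq, hf]; ring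
    _ = ∫ z, ⟪φ z - ∫ z', φ z' ∂P, f⟫ ^ 2 ∂P := by
      rw [← heig]; exact inner_integral_rankOne_self_apply hcov f
    _ = Var[fun z ↦ ⟪f, φ z⟫; P] := by
      rw [variance_eq_integral hg, integral_inner hφ]
      congr 1 with z
      rw [inner_sub_left, real_inner_comm, real_inner_comm f]

end FeatureSpace

/-- For a bounded kernel with bound `M_k`, a unit eigenvector `f` of the
covariance operator `Σ` of `P` with eigenvalue `λ`, and `X₁,…,Xₙ,Y₁,…,Yₙ` i.i.d. from `P`,
for all `δ > 0`:
`P((1/n) ∑ᵢ ⟪f, φ(Xᵢ) − φ(Yᵢ)⟫² − 2λ < −8 M_k √(δ/n)) ≤ e^{−δ}`. -/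
theorem concentration_projected_variance
    {Zt H Ω : Type*} [NormedAddCommGroup H] [InnerProductSpace ℝ H] [CompleteSpace H]
    [MeasurableSpace Zt] [MeasurableSpace Ω]
    (μ : Measure Ω) [IsProbabilityMeasure μ]
    (P : Measure Zt) [IsProbabilityMeasure P]
    (φ : Zt → H) (k : Zt → Zt → ℝ) (Mk : ℝ)
    (hrepr : ∀ z z', k z z' = ⟪φ z, φ z'⟫)
    (hbound : ∀ z, k z z ≤ Mk)
    (n : ℕ) (hn : 0 < n)
    (V : Fin n ⊕ Fin n → Ω → Zt)
    (hVmeas : ∀ j, Measurable (V j))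
    (hVindep : iIndepFun V μ)
    (hVlaw : ∀ j, Measure.map (V j) μ = P)
    (hint₁ : Integrable (fun z => φ z) P)
    (hint₂ : Integrable (fun z =>
      rankOne (φ z - ∫ z', φ z' ∂P) (φ z - ∫ z', φ z' ∂P)) P)
    (f : H) (hf : ‖f‖ = 1) (lam : ℝ)
    (heig : (∫ z, rankOne (φ z - ∫ z', φ z' ∂P) (φ z - ∫ z', φ z' ∂P) ∂P) f = lam • f)
    (δ : ℝ) (hδ : 0 < δ) :
    μ {ω | (n : ℝ)⁻¹ * (∑ i, ⟪f, φ (V (Sum.inl i) ω) - φ (V (Sum.inr i) ω)⟫ ^ 2)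
        - 2 * lam < -(8 * Mk * Real.sqrt (δ / n))} ≤
      ENNReal.ofReal (Real.exp (-δ)) := by
  set g : Zt → ℝ := fun z ↦ ⟪f, φ z⟫
  have hlam : lam = Var[g; P] := eigenvalue_eq_variance_inner hint₁ hint₂ hf heig
  have hgM : ∀ z, g z ^ 2 ≤ Mk := inner_sq_le_of_kernel_le hrepr hbound hf
  simp_rw [inner_sub_right, hlam]
  obtain ⟨z₀⟩ := nonempty_of_isProbabilityMeasure P
  rcases ((sq_nonneg _).trans (hgM z₀)).eq_or_lt with hMk | hMk
  · have hg : g = 0 := funext fun z ↦ pow_eq_zero_iff two_ne_zero |>.1 <|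
      le_antisymm (hMk ▸ hgM z) (sq_nonneg _)
    have hnonneg (ω : Ω) : 0 ≤ (n : ℝ)⁻¹ *
        ∑ i, (⟪f, φ (V (.inl i) ω)⟫ - ⟪f, φ (V (.inr i) ω)⟫) ^ 2 := by positivity
    simp [hg, ← hMk, not_lt.2 (hnonneg _)]
  have hg : AEMeasurable g P :=
    (aestronglyMeasurable_const.inner hint₁.aestronglyMeasurable).aemeasurable
  have hHoeffding := measureReal_mean_sq_sub_lt_le hVmeas hVindep hVlaw hg
    (ae_of_all P hgM) (t := 8 * Mk * Real.sqrt (δ / n)) (by positivity)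
  have hexponent : n * (8 * Mk * Real.sqrt (δ / n)) ^ 2 / (8 * Mk ^ 2) = 8 * δ := by
    rw [mul_pow, Real.sq_sqrt (by positivity)]
    field_simp
  rw [Fintype.card_fin, neg_mul, neg_div, hexponent] at hHoeffding
  calc _ = ENNReal.ofReal (μ.real _) := (ENNReal.ofReal_toReal (measure_ne_top _ _)).symm
    _ ≤ ENNReal.ofReal (Real.exp (-(8 * δ))) := ENNReal.ofReal_le_ofReal hHoeffding
    _ ≤ ENNReal.ofReal (Real.exp (-δ)) := by gcongr; linarith
end

section
/- For a bounded kernel with bound M_k, if Z_1,…,Z_n are i.i.d. from P with mean embedding μ = E[φ(Z)], and μ̂ = (1/n)Σ φ(Z_i), then E[‖μ − μ̂‖_H] ≤ 2√(M_k/n). -/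
open MeasureTheory ProbabilityTheory
open scoped RealInnerProductSpace

/-!
Centre the sample: `μ - μ̂` is the average of the vectors `ψ (Zᵢ)` with `ψ z = μ - φ z`, which
have mean zero and norm at most `2 √M_k`. By Jensen, `E‖μ - μ̂‖ ≤ (E‖μ - μ̂‖²)^(1/2)`; expanding the
square, independence gives `E⟪ψ (Zᵢ), ψ (Zⱼ)⟫ = ⟪E ψ (Zᵢ), E ψ (Zⱼ)⟫ = 0` for `i ≠ j`, so
`E‖∑ ψ (Zᵢ)‖² = n E‖ψ (Z)‖² ≤ 4 n M_k`.
-/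

theorem MeasureTheory.MemLp.integrable_inner {α 𝕜 E : Type*} [MeasurableSpace α]
    {μ : Measure α} [RCLike 𝕜] [NormedAddCommGroup E] [InnerProductSpace 𝕜 E] {f g : α → E}
    (hf : MemLp f 2 μ) (hg : MemLp g 2 μ) : Integrable (fun x => inner 𝕜 (f x) (g x)) μ :=
  (L2.integrable_inner (hf.toLp f) (hg.toLp g)).congr <| by
    filter_upwards [hf.coeFn_toLp, hg.coeFn_toLp] with x hfx hgx
    rw [hfx, hgx]

theorem MeasureTheory.integral_le_sqrt_integral_sq {Ω : Type*} [MeasurableSpace Ω]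
    {μ : Measure Ω} [IsProbabilityMeasure μ] {X : Ω → ℝ} (hX : MemLp X 2 μ) :
    ∫ ω, X ω ∂μ ≤ √(∫ ω, X ω ^ 2 ∂μ) := by
  have h := variance_nonneg X μ
  rw [variance_eq_sub hX] at h
  exact (le_abs_self _).trans (Real.abs_le_sqrt (by simpa using h))

section Sample

variable {Ω Zt H : Type*} [MeasurableSpace Ω] [MeasurableSpace Zt]
  [NormedAddCommGroup H] [InnerProductSpace ℝ H] [CompleteSpace H]
  {μ : Measure Ω} {P : Measure Zt} {ψ : Zt → H}

theorem integral_inner_comp_eq_zero_of_indepFun {X Y : Ω → Zt}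
    (hXY : X ⟂ᵢ[μ] Y) (hX : AEMeasurable X μ) (hY : AEMeasurable Y μ)
    (hXlaw : μ.map X = P) (hYlaw : μ.map Y = P) (hψ : Integrable ψ P) (hψ0 : ∫ z, ψ z ∂P = 0) :
    ∫ ω, ⟪ψ (X ω), ψ (Y ω)⟫ ∂μ = 0 := by
  have hmean {W : Ω → Zt} (hW : AEMeasurable W μ) (hWlaw : μ.map W = P) :
      ∫ ω, ψ (W ω) ∂μ = 0 := by
    rw [← integral_map hW (hWlaw ▸ hψ.aestronglyMeasurable), hWlaw, hψ0]
  calc ∫ ω, ⟪ψ (X ω), ψ (Y ω)⟫ ∂μ = ⟪∫ ω, ψ (X ω) ∂μ, ∫ ω, ψ (Y ω) ∂μ⟫ :=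
        hXY.integral_bilin_comp_comp hX hY (hXlaw ▸ hψ) (hYlaw ▸ hψ) (innerSL ℝ)
    _ = 0 := by rw [hmean hX hXlaw, inner_zero_left]

theorem integral_norm_sum_comp_sq_eq_card_mul {ι : Type*} [Fintype ι] [IsFiniteMeasure μ]
    {Z : ι → Ω → Zt}
    (hZ : ∀ i, AEMeasurable (Z i) μ) (hindep : Pairwise fun i j => Z i ⟂ᵢ[μ] Z j)
    (hlaw : ∀ i, μ.map (Z i) = P) (hψ : MemLp ψ 2 P) (hψ0 : ∫ z, ψ z ∂P = 0) :
    ∫ ω, ‖∑ i, ψ (Z i ω)‖ ^ 2 ∂μ = Fintype.card ι * ∫ z, ‖ψ z‖ ^ 2 ∂P := by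
  have hL2 (i : ι) : MemLp (fun ω => ψ (Z i ω)) 2 μ := (hlaw i ▸ hψ).comp_of_map (hZ i)
  have hint (i j : ι) : Integrable (fun ω => ⟪ψ (Z i ω), ψ (Z j ω)⟫) μ :=
    (hL2 i).integrable_inner (hL2 j)
  have hdiag (i : ι) : ∫ ω, ⟪ψ (Z i ω), ψ (Z i ω)⟫ ∂μ = ∫ z, ‖ψ z‖ ^ 2 ∂P := by
    simp_rw [real_inner_self_eq_norm_sq]
    rw [← integral_map (f := fun z => ‖ψ z‖ ^ 2) (hZ i)
      (hlaw i ▸ hψ.aestronglyMeasurable.norm.pow 2), hlaw i]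
  have hrow (i : ι) : ∑ j, ∫ ω, ⟪ψ (Z i ω), ψ (Z j ω)⟫ ∂μ = ∫ z, ‖ψ z‖ ^ 2 ∂P := by
    have : IsFiniteMeasure P := hlaw i ▸ inferInstance
    rw [Finset.sum_eq_single i (fun j _ hji => integral_inner_comp_eq_zero_of_indepFun
      (hindep hji.symm) (hZ i) (hZ j) (hlaw i) (hlaw j) (hψ.integrable one_le_two) hψ0)
      (by simp), hdiag]
  calc ∫ ω, ‖∑ i, ψ (Z i ω)‖ ^ 2 ∂μ = ∫ ω, ∑ i, ∑ j, ⟪ψ (Z i ω), ψ (Z j ω)⟫ ∂μ := by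
        simp_rw [← real_inner_self_eq_norm_sq, sum_inner, inner_sum]
    _ = ∑ i, ∑ j, ∫ ω, ⟪ψ (Z i ω), ψ (Z j ω)⟫ ∂μ := by
        rw [integral_finsetSum _ fun i _ => integrable_finsetSum _ fun j _ => hint i j]
        simp_rw [integral_finsetSum _ fun j _ => hint _ j]
    _ = Fintype.card ι * ∫ z, ‖ψ z‖ ^ 2 ∂P := by
        simp [hrow]

theorem integral_norm_empirical_mean_le {ι : Type*} [Fintype ι] [IsProbabilityMeasure μ]
    {Z : ι → Ω → Zt}
    (hZ : ∀ i, AEMeasurable (Z i) μ) (hindep : Pairwise fun i j => Z i ⟂ᵢ[μ] Z j)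
    (hlaw : ∀ i, μ.map (Z i) = P) (hψ : MemLp ψ 2 P) (hψ0 : ∫ z, ψ z ∂P = 0) :
    ∫ ω, ‖(Fintype.card ι : ℝ)⁻¹ • ∑ i, ψ (Z i ω)‖ ∂μ ≤
      √((∫ z, ‖ψ z‖ ^ 2 ∂P) / Fintype.card ι) := by
  set n : ℝ := (Fintype.card ι : ℝ)
  have hn : 0 ≤ n := Nat.cast_nonneg _
  have hS : MemLp (fun ω => ∑ i, ψ (Z i ω)) 2 μ :=
    memLp_finsetSum _ fun i _ => (hlaw i ▸ hψ).comp_of_map (hZ i)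
  calc ∫ ω, ‖n⁻¹ • ∑ i, ψ (Z i ω)‖ ∂μ = n⁻¹ * ∫ ω, ‖∑ i, ψ (Z i ω)‖ ∂μ := by
        simp_rw [norm_smul, Real.norm_of_nonneg (inv_nonneg.mpr hn), integral_const_mul]
    _ ≤ n⁻¹ * √(∫ ω, ‖∑ i, ψ (Z i ω)‖ ^ 2 ∂μ) := by
        gcongr
        exact integral_le_sqrt_integral_sq hS.norm
    _ = n⁻¹ * √(n * ∫ z, ‖ψ z‖ ^ 2 ∂P) := by
        rw [integral_norm_sum_comp_sq_eq_card_mul hZ hindep hlaw hψ hψ0]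
    _ = √((∫ z, ‖ψ z‖ ^ 2 ∂P) / n) := by
        rw [Real.sqrt_mul hn, Real.sqrt_div' _ hn]
        rcases hn.eq_or_lt with hn0 | hpos
        · simp [← hn0]
        · field_simp
          rw [Real.sq_sqrt hn]

end Sample

/-- For a bounded kernel with bound `M_k`, if `Z₁,…,Zₙ` are i.i.d. from `P`,
with mean embedding `μ = E[φ(Z)]` and empirical mean `μ̂ = (1/n) ∑ᵢ φ(Zᵢ)`, then
`E[‖μ − μ̂‖] ≤ 2 √(M_k/n)`. -/
theorem expected_mean_embedding_deviation
    {Zt H Ω : Type*} [NormedAddCommGroup H] [InnerProductSpace ℝ H] [CompleteSpace H]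
    [MeasurableSpace Zt] [MeasurableSpace Ω]
    (μ : Measure Ω) [IsProbabilityMeasure μ]
    (P : Measure Zt) [IsProbabilityMeasure P]
    (φ : Zt → H) (k : Zt → Zt → ℝ) (Mk : ℝ)
    (hrepr : ∀ z z', k z z' = ⟪φ z, φ z'⟫)
    (hbound : ∀ z, k z z ≤ Mk)
    (n : ℕ) (hn : 0 < n)
    (Z : Fin n → Ω → Zt)
    (hZmeas : ∀ i, Measurable (Z i))
    (hZindep : iIndepFun Z μ)
    (hZlaw : ∀ i, Measure.map (Z i) μ = P)
    (hint : Integrable (fun z => φ z) P) :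
    (∫ ω, ‖(∫ z, φ z ∂P) - (n : ℝ)⁻¹ • ∑ i, φ (Z i ω)‖ ∂μ) ≤
      2 * Real.sqrt (Mk / n) := by
  set m : H := ∫ z, φ z ∂P
  have hφ (z : Zt) : ‖φ z‖ ^ 2 ≤ Mk := by
    rw [← real_inner_self_eq_norm_sq, ← hrepr]
    exact hbound z
  have hMk : 0 ≤ Mk := (sq_nonneg _).trans (hφ (nonempty_of_isProbabilityMeasure P).some)
  have hφ_le (z : Zt) : ‖φ z‖ ≤ √Mk := by simpa using Real.abs_le_sqrt (hφ z)
  have hm_le : ‖m‖ ≤ √Mk := by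
    simpa using norm_integral_le_of_norm_le_const (μ := P) (ae_of_all _ hφ_le)
  have hψ_le (z : Zt) : ‖m - φ z‖ ≤ 2 * √Mk := by
    linarith [norm_sub_le m (φ z), hm_le, hφ_le z]
  have hψ_sq (z : Zt) : ‖m - φ z‖ ^ 2 ≤ 4 * Mk :=
    calc ‖m - φ z‖ ^ 2 ≤ (2 * √Mk) ^ 2 := by gcongr; exact hψ_le z
      _ = 4 * Mk := by rw [mul_pow, Real.sq_sqrt hMk]; norm_num
  have hψL2 : MemLp (fun z => m - φ z) 2 P :=
    MemLp.of_bound ((integrable_const m).sub hint).aestronglyMeasurable _ (ae_of_all _ hψ_le)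
  have hψ0 : ∫ z, m - φ z ∂P = 0 := by
    rw [integral_sub (integrable_const m) hint, integral_const]
    simp [m]
  have hdev (ω : Ω) : m - (n : ℝ)⁻¹ • ∑ i, φ (Z i ω) = (n : ℝ)⁻¹ • ∑ i, (m - φ (Z i ω)) := by
    rw [Finset.sum_sub_distrib, smul_sub, Finset.sum_const, Finset.card_univ, Fintype.card_fin,
      ← Nat.cast_smul_eq_nsmul ℝ, smul_smul, inv_mul_cancel₀ (Nat.cast_ne_zero.mpr hn.ne'),
      one_smul]
  have hmean := integral_norm_empirical_mean_le (fun i => (hZmeas i).aemeasurable)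
    (fun i j hij => hZindep.indepFun hij) hZlaw hψL2 hψ0
  rw [Fintype.card_fin] at hmean
  calc ∫ ω, ‖m - (n : ℝ)⁻¹ • ∑ i, φ (Z i ω)‖ ∂μ
      = ∫ ω, ‖(n : ℝ)⁻¹ • ∑ i, (m - φ (Z i ω))‖ ∂μ := by simp_rw [hdev]
    _ ≤ √((∫ z, ‖m - φ z‖ ^ 2 ∂P) / n) := hmean
    _ ≤ √(2 ^ 2 * Mk / n) := by
        gcongr
        calc ∫ z, ‖m - φ z‖ ^ 2 ∂P ≤ ∫ _, 4 * Mk ∂P :=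
              integral_mono (hψL2.integrable_norm_pow two_ne_zero) (integrable_const _) hψ_sq
          _ = 2 ^ 2 * Mk := by norm_num
    _ = 2 * √(Mk / n) := by
        rw [mul_div_assoc, Real.sqrt_mul (by positivity), Real.sqrt_sq zero_le_two]
end

section
/- For a bounded kernel with bound M_k, if Z_1,…,Z_n are i.i.d. from P, then for all δ > 0, P(‖μ − μ̂‖_H > 2√(M_k/n)(1 + √(δ/2))) ≤ e^{−δ}, where μ = E[φ(Z)] and μ̂ = (1/n)Σ_i φ(Z_i). -/
/-!
Replacing one of the `n` samples moves the empirical mean by at most `2 √M_k / n`, so by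
McDiarmid's inequality the deviation `‖μ - μ̂‖` exceeds its expectation by `ε` with probability
at most `exp (-n ε² / (2 M_k))`. McDiarmid's inequality is proved in sub-Gaussian form by
induction on `n`: conditionally on the other coordinates, the first one contributes a factor
given by Hoeffding's lemma. The expectation of the deviation is at most `2 √(M_k / n)` by Jensen,
because `E ‖∑ᵢ (φ (Zᵢ) - μ)‖² = ∑ᵢ E ‖φ (Zᵢ) - μ‖²`, the cross terms vanishing by independence.
Taking `ε = 2 √(M_k / n) √(δ / 2)` gives `e^{-δ}`. Since `φ` is only almost everywhere strongly
measurable, it is first replaced by a bounded strongly measurable version.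
-/

open MeasureTheory ProbabilityTheory Real
open scoped RealInnerProductSpace NNReal

lemma exists_forall_mem_Icc_of_abs_sub_le {β : Type*} {f : β → ℝ} {C : ℝ}
    (h : ∀ x y, |f x - f y| ≤ C) : ∃ a, ∀ x, f x ∈ Set.Icc a (a + C) := by
  rcases isEmpty_or_nonempty β with hβ | hβ
  · exact ⟨0, isEmptyElim⟩
  have x₀ : β := Classical.arbitrary β
  have hbdd : BddBelow (Set.range f) :=
    ⟨f x₀ - C, by rintro _ ⟨y, rfl⟩; linarith [abs_le.1 (h x₀ y)]⟩
  refine ⟨⨅ y, f y, fun x => ⟨ciInf_le hbdd x, ?_⟩⟩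
  have : f x - C ≤ ⨅ y, f y := le_ciInf fun y => by linarith [abs_le.1 (h x y)]
  linarith

lemma integrable_of_abs_sub_le {β : Type*} [MeasurableSpace β] {μ : Measure β}
    [IsFiniteMeasure μ] {f : β → ℝ} (hf : AEMeasurable f μ) {C : ℝ}
    (h : ∀ x y, |f x - f y| ≤ C) : Integrable f μ :=
  have ⟨a, ha⟩ := exists_forall_mem_Icc_of_abs_sub_le h
  Integrable.of_mem_Icc a (a + C) hf (ae_of_all _ ha)

lemma hasSubgaussianMGF_sub_integral_of_abs_sub_le {β : Type*} [MeasurableSpace β]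
    {μ : Measure β} [IsProbabilityMeasure μ] {f : β → ℝ} (hf : AEMeasurable f μ) {c : ℝ≥0}
    (h : ∀ x y, |f x - f y| ≤ c) :
    HasSubgaussianMGF (fun x => f x - ∫ y, f y ∂μ) ((c / 2) ^ 2) μ := by
  obtain ⟨a, ha⟩ := exists_forall_mem_Icc_of_abs_sub_le h
  simpa using hasSubgaussianMGF_of_mem_Icc hf (ae_of_all _ ha)

lemma ProbabilityTheory.HasSubgaussianMGF.prod_add {α β : Type*} [MeasurableSpace α]
    [MeasurableSpace β] {ν : Measure α} {μ : Measure β} [SFinite ν] [SFinite μ]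
    {Y : α × β → ℝ} {X : β → ℝ} {cY cX : ℝ≥0} (hYm : AEStronglyMeasurable Y (ν.prod μ))
    (hY : ∀ b, HasSubgaussianMGF (fun a => Y (a, b)) cY ν) (hX : HasSubgaussianMGF X cX μ) :
    HasSubgaussianMGF (fun p => Y p + X p.2) (cY + cX) (ν.prod μ) := by
  have hsection (t : ℝ) (b : β) :
      ∫ a, exp (t * (Y (a, b) + X b)) ∂ν = mgf (fun a => Y (a, b)) ν t * exp (t * X b) := by
    simp only [mul_add, exp_add, mgf, integral_mul_const]
  have hsection_le (t : ℝ) (b : β) :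
      ∫ a, exp (t * (Y (a, b) + X b)) ∂ν ≤ exp (cY * t ^ 2 / 2) * exp (t * X b) := by
    rw [hsection]
    exact mul_le_mul_of_nonneg_right ((hY b).mgf_le t) (exp_pos _).le
  have hint (t : ℝ) : Integrable (fun p => exp (t * (Y p + X p.2))) (ν.prod μ) := by
    have hm : AEStronglyMeasurable (fun p => exp (t * (Y p + X p.2))) (ν.prod μ) :=
      continuous_exp.comp_aestronglyMeasurable
        ((hYm.add hX.aestronglyMeasurable.comp_snd).const_mul t)
    refine (integrable_prod_iff' hm).2 ⟨ae_of_all _ fun b => ?_, ?_⟩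
    · simpa only [mul_add, exp_add] using ((hY b).integrable_exp_mul t).mul_const _
    · refine ((hX.integrable_exp_mul t).const_mul (exp (cY * t ^ 2 / 2))).mono'
        hm.norm.prod_swap.integral_prod_right' (ae_of_all _ fun b => ?_)
      simp only [Real.norm_eq_abs, abs_exp]
      rw [abs_of_nonneg (integral_nonneg fun a => (exp_pos _).le)]
      exact hsection_le t b
  refine ⟨hint, fun t => ?_⟩
  calc mgf (fun p => Y p + X p.2) (ν.prod μ) t
      = ∫ b, ∫ a, exp (t * (Y (a, b) + X b)) ∂ν ∂μ := integral_prod_symm _ (hint t)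
    _ ≤ ∫ b, exp (cY * t ^ 2 / 2) * exp (t * X b) ∂μ :=
        integral_mono_of_nonneg (ae_of_all _ fun b => integral_nonneg fun a => (exp_pos _).le)
          ((hX.integrable_exp_mul t).const_mul _) (ae_of_all _ (hsection_le t))
    _ = exp (cY * t ^ 2 / 2) * mgf X μ t := integral_const_mul _ _
    _ ≤ exp (cY * t ^ 2 / 2) * exp (cX * t ^ 2 / 2) :=
        mul_le_mul_of_nonneg_left (hX.mgf_le t) (exp_pos _).le
    _ = exp (↑(cY + cX) * t ^ 2 / 2) := by rw [← exp_add]; push_cast; ring_nf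

lemma MeasureTheory.MeasurePreserving.hasSubgaussianMGF_comp_iff {β γ : Type*}
    [MeasurableSpace β] [MeasurableSpace γ] {μ : Measure β} {ν : Measure γ} {e : β → γ}
    (he : MeasurePreserving e μ ν) {X : γ → ℝ} (hX : AEMeasurable X ν) {c : ℝ≥0} :
    HasSubgaussianMGF (X ∘ e) c μ ↔ HasSubgaussianMGF X c ν := by
  have hXe : AEMeasurable X (μ.map e) := he.map_eq ▸ hX
  have hid : IdentDistrib (X ∘ e) X μ ν :=
    ⟨hXe.comp_aemeasurable he.measurable.aemeasurable, hX, by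
      rw [← AEMeasurable.map_map_of_aemeasurable hXe he.measurable.aemeasurable, he.map_eq]⟩
  exact ⟨fun h => h.congr_identDistrib hid, fun h => h.congr_identDistrib hid.symm⟩

section FinCons

variable {α : Type*} [MeasurableSpace α] {n : ℕ}

lemma measurable_finCons :
    Measurable fun p : α × (Fin n → α) => (Fin.cons p.1 p.2 : Fin (n + 1) → α) := by
  refine measurable_pi_iff.2 fun i => i.cases ?_ fun j => ?_
  · simpa using measurable_fst
  · simp only [Fin.cons_succ]; fun_prop

lemma measurePreserving_finCons (P : Fin (n + 1) → Measure α) [∀ i, SigmaFinite (P i)] :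
    MeasurePreserving (fun p : α × (Fin n → α) => (Fin.cons p.1 p.2 : Fin (n + 1) → α))
      ((P 0).prod (Measure.pi fun i => P i.succ)) (Measure.pi P) := by
  convert (measurePreserving_piFinSuccAbove P 0).symm using 1
  · ext p
    simp [Fin.insertNthEquiv, Fin.insertNth_zero']
  · simp

end FinCons

def BoundedDifferences {ι α : Type*} [DecidableEq ι] (f : (ι → α) → ℝ) (c : ι → ℝ≥0) : Prop :=
  ∀ x i y, |f x - f (Function.update x i y)| ≤ c i

namespace BoundedDifferences

variable {α : Type*}

section Cons

variable {n : ℕ} {f : (Fin (n + 1) → α) → ℝ} {c : Fin (n + 1) → ℝ≥0}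

lemma abs_sub_cons_le (hf : BoundedDifferences f c) (z z' : α) (w : Fin n → α) :
    |f (Fin.cons z w) - f (Fin.cons z' w)| ≤ c 0 := by
  simpa only [Fin.update_cons_zero] using hf (Fin.cons z w) 0 z'

lemma cons (hf : BoundedDifferences f c) (z : α) :
    BoundedDifferences (fun w => f (Fin.cons z w)) (fun i => c i.succ) := by
  intro w i y
  simpa only [Fin.cons_update] using hf (Fin.cons z w) i.succ y

lemma integral_cons [MeasurableSpace α] (hf : BoundedDifferences f c) (hmeas : Measurable f)
    (ν : Measure α) [IsProbabilityMeasure ν] :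
    BoundedDifferences (fun w => ∫ z, f (Fin.cons z w) ∂ν) (fun i => c i.succ) := by
  intro w i y
  have hint (v : Fin n → α) : Integrable (fun z => f (Fin.cons z v)) ν :=
    integrable_of_abs_sub_le
      (hmeas.comp (measurable_finCons.comp measurable_prodMk_right)).aemeasurable
      fun z z' => hf.abs_sub_cons_le z z' v
  have hpt (z : α) :
      ‖f (Fin.cons z w) - f (Fin.cons z (Function.update w i y))‖ ≤ c i.succ :=
    hf.cons z w i y
  rw [← integral_sub (hint w) (hint _), ← Real.norm_eq_abs]
  simpa using norm_integral_le_of_norm_le_const (μ := ν) (ae_of_all _ hpt)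

end Cons

lemma abs_sub_le_sum : ∀ {n : ℕ} {f : (Fin n → α) → ℝ} {c : Fin n → ℝ≥0},
    BoundedDifferences f c → ∀ x y, |f x - f y| ≤ ∑ i, (c i : ℝ)
  | 0, f, c, _, x, y => by simp [Subsingleton.elim x y]
  | n + 1, f, c, hf, x, y => by
    rw [← Fin.cons_self_tail x, ← Fin.cons_self_tail y, Fin.sum_univ_succ]
    calc |f (Fin.cons (x 0) (Fin.tail x)) - f (Fin.cons (y 0) (Fin.tail y))|
        ≤ |f (Fin.cons (x 0) (Fin.tail x)) - f (Fin.cons (y 0) (Fin.tail x))|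
          + |f (Fin.cons (y 0) (Fin.tail x)) - f (Fin.cons (y 0) (Fin.tail y))| :=
          abs_sub_le _ _ _
      _ ≤ c 0 + ∑ i : Fin n, (c i.succ : ℝ) :=
          add_le_add (hf.abs_sub_cons_le _ _ _)
            (abs_sub_le_sum (hf.cons (y 0)) (Fin.tail x) (Fin.tail y))

lemma integrable [MeasurableSpace α] {n : ℕ} {f : (Fin n → α) → ℝ} {c : Fin n → ℝ≥0}
    (hf : BoundedDifferences f c) {μ : Measure (Fin n → α)} [IsFiniteMeasure μ]
    (hmeas : AEMeasurable f μ) : Integrable f μ :=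
  integrable_of_abs_sub_le hmeas hf.abs_sub_le_sum

end BoundedDifferences

/-- **McDiarmid's inequality**, in sub-Gaussian form. -/
theorem hasSubgaussianMGF_sub_integral_of_boundedDifferences {α : Type*} [MeasurableSpace α] :
    ∀ {n : ℕ} (P : Fin n → Measure α) [∀ i, IsProbabilityMeasure (P i)]
      {f : (Fin n → α) → ℝ} {c : Fin n → ℝ≥0}, Measurable f → BoundedDifferences f c →
      HasSubgaussianMGF (fun x => f x - ∫ y, f y ∂Measure.pi P) (∑ i, (c i / 2) ^ 2)
        (Measure.pi P)
  | 0, P, _, f, c, _, _ => by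
    have hconst (x : Fin 0 → α) : f x - ∫ y, f y ∂Measure.pi P = 0 := by
      simp [Subsingleton.elim _ x]
    simp [hconst, HasSubgaussianMGF.fun_zero]
  | n + 1, P, _, f, c, hmeas, hf => by
    have hcons := measurePreserving_finCons P
    -- `g w` is the conditional expectation of `f` given the last `n` coordinates `w`.
    set g : (Fin n → α) → ℝ := fun w => ∫ z, f (Fin.cons z w) ∂P 0
    have hg_meas : Measurable g :=
      (hmeas.comp hcons.measurable).stronglyMeasurable.integral_prod_left'.measurable
    have hg_int : ∫ x, f x ∂Measure.pi P = ∫ w, g w ∂Measure.pi fun i => P i.succ := by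
      rw [← hcons.map_eq, integral_map hcons.measurable.aemeasurable hmeas.aestronglyMeasurable]
      exact integral_prod_symm _
        (hcons.integrable_comp_of_integrable (hf.integrable hmeas.aemeasurable))
    have hX := hasSubgaussianMGF_sub_integral_of_boundedDifferences (fun i => P i.succ) hg_meas
      (hf.integral_cons hmeas (P 0))
    have hY (w : Fin n → α) :
        HasSubgaussianMGF (fun z => f (Fin.cons z w) - g w) ((c 0 / 2) ^ 2) (P 0) :=
      hasSubgaussianMGF_sub_integral_of_abs_sub_le
        (hmeas.comp (measurable_finCons.comp measurable_prodMk_right)).aemeasurable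
        fun z z' => hf.abs_sub_cons_le z z' w
    have hsum := hX.prod_add (Y := fun p => f (Fin.cons p.1 p.2) - g p.2)
      ((hmeas.comp measurable_finCons).sub (hg_meas.comp measurable_snd)).aestronglyMeasurable hY
    rw [Fin.sum_univ_succ, hg_int, ← hcons.hasSubgaussianMGF_comp_iff (by fun_prop)]
    simpa [Function.comp_def] using hsum

theorem measureReal_sub_integral_ge_le_of_boundedDifferences {α : Type*} [MeasurableSpace α]
    {n : ℕ} (P : Fin n → Measure α) [∀ i, IsProbabilityMeasure (P i)] {f : (Fin n → α) → ℝ}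
    {c : Fin n → ℝ≥0} (hmeas : Measurable f) (hf : BoundedDifferences f c) {ε : ℝ} (hε : 0 ≤ ε) :
    (Measure.pi P).real {x | ε ≤ f x - ∫ y, f y ∂Measure.pi P}
      ≤ exp (-2 * ε ^ 2 / ∑ i, (c i : ℝ) ^ 2) := by
  convert (hasSubgaussianMGF_sub_integral_of_boundedDifferences P hmeas hf).measure_ge_le hε
    using 2
  push_cast
  rw [show ∑ i, ((c i : ℝ) / 2) ^ 2 = (∑ i, (c i : ℝ) ^ 2) / 4 by
    rw [Finset.sum_div]; congr 1; ext; ring]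
  ring

lemma integral_norm_sum_sq_pi {α H : Type*} [MeasurableSpace α] [NormedAddCommGroup H]
    [InnerProductSpace ℝ H] [CompleteSpace H] {ι : Type*} [Fintype ι] (P : ι → Measure α)
    [∀ i, IsProbabilityMeasure (P i)] {Y : α → H} (hY : ∀ i, MemLp Y 2 (P i))
    (hY₀ : ∀ i, ∫ z, Y z ∂P i = 0) :
    ∫ x, ‖∑ i, Y (x i)‖ ^ 2 ∂Measure.pi P = ∑ i, ∫ z, ‖Y z‖ ^ 2 ∂P i := by
  classical
  have hX (i : ι) : MemLp (fun x : ι → α => Y (x i)) 2 (Measure.pi P) :=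
    (hY i).comp_measurePreserving (measurePreserving_eval P i)
  have hint (i j : ι) : Integrable (fun x : ι → α => ⟪Y (x i), Y (x j)⟫) (Measure.pi P) :=
    ((hX i).norm.integrable_mul (hX j).norm).mono ((hX i).1.inner (hX j).1)
      (ae_of_all _ fun x => by simpa using abs_real_inner_le_norm (Y (x i)) (Y (x j)))
  have hcross (i j : ι) (hij : i ≠ j) : ∫ x, ⟪Y (x i), Y (x j)⟫ ∂Measure.pi P = 0 := by
    have hind := (iIndepFun_pi (μ := P) (X := fun _ => (id : α → α))
      fun _ => aemeasurable_id).indepFun hij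
    have hmap (k : ι) : (Measure.pi P).map (fun x => id (x k)) = P k :=
      (measurePreserving_eval P k).map_eq
    have := hind.integral_bilin_comp_comp (f := Y) (g := Y) (measurable_pi_apply i).aemeasurable
      (measurable_pi_apply j).aemeasurable (by rw [hmap]; exact (hY i).integrable one_le_two)
      (by rw [hmap]; exact (hY j).integrable one_le_two) (innerSL ℝ)
    have hmean (k : ι) : ∫ x, Y (x k) ∂Measure.pi P = 0 := by
      rw [integral_comp_eval (μ := P) (hY k).1, hY₀]
    exact this.trans (by simp [hmean])
  calc ∫ x, ‖∑ i, Y (x i)‖ ^ 2 ∂Measure.pi P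
      = ∫ x, ∑ i, ∑ j, ⟪Y (x i), Y (x j)⟫ ∂Measure.pi P := by
        simp_rw [← real_inner_self_eq_norm_sq, sum_inner, inner_sum]
    _ = ∑ i, ∑ j, ∫ x, ⟪Y (x i), Y (x j)⟫ ∂Measure.pi P := by
        rw [integral_finsetSum _ fun i _ => integrable_finsetSum _ fun j _ => hint i j]
        simp_rw [integral_finsetSum _ fun j _ => hint _ j]
    _ = ∑ i, ∫ x, ⟪Y (x i), Y (x i)⟫ ∂Measure.pi P :=
        Finset.sum_congr rfl fun i _ =>
          Finset.sum_eq_single i (fun j _ hji => hcross i j hji.symm) (by simp)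
    _ = ∑ i, ∫ z, ‖Y z‖ ^ 2 ∂P i := by
        simp_rw [real_inner_self_eq_norm_sq]
        exact Finset.sum_congr rfl fun i _ => integral_comp_eval (μ := P)
          ((continuous_pow 2).comp_aestronglyMeasurable (hY i).1.norm)

lemma sq_integral_le_integral_sq {Ω : Type*} [MeasurableSpace Ω] {μ : Measure Ω}
    [IsProbabilityMeasure μ] {X : Ω → ℝ} (hX : MemLp X 2 μ) :
    (∫ ω, X ω ∂μ) ^ 2 ≤ ∫ ω, X ω ^ 2 ∂μ := by
  have := variance_nonneg X μ
  rw [variance_eq_sub hX] at this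
  simpa using this

lemma MeasureTheory.AEStronglyMeasurable.exists_stronglyMeasurable_ae_eq_forall_norm_le
    {α E : Type*} [MeasurableSpace α] [NormedAddCommGroup E] {μ : Measure α} {f : α → E}
    (hf : AEStronglyMeasurable f μ) {B : ℝ≥0} (hfB : ∀ z, ‖f z‖ ≤ B) :
    ∃ g, StronglyMeasurable g ∧ f =ᵐ[μ] g ∧ ∀ z, ‖g z‖ ≤ B := by
  set s := {z | ‖hf.mk f z‖ ≤ B}
  refine ⟨s.indicator (hf.mk f), hf.stronglyMeasurable_mk.indicator
      (measurableSet_le hf.stronglyMeasurable_mk.norm.measurable measurable_const),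
    ?_, fun z => ?_⟩
  · filter_upwards [hf.ae_eq_mk] with z hz
    rw [Set.indicator_of_mem (by simpa [s, ← hz] using hfB z), hz]
  · by_cases hz : z ∈ s
    · rw [Set.indicator_of_mem hz]; exact hz
    · simp [Set.indicator_of_notMem hz]

noncomputable def empiricalMean {α H : Type*} [AddCommGroup H] [Module ℝ H] {n : ℕ} (ψ : α → H)
    (x : Fin n → α) : H :=
  (n : ℝ)⁻¹ • ∑ i, ψ (x i)

section NormedSpace

variable {α E : Type*} [NormedAddCommGroup E] [NormedSpace ℝ E] {n : ℕ} {ψ : α → E} {B : ℝ≥0}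

lemma norm_empiricalMean_le (hψ : ∀ z, ‖ψ z‖ ≤ B) (x : Fin n → α) :
    ‖empiricalMean ψ x‖ ≤ B := by
  rcases Nat.eq_zero_or_pos n with rfl | hn
  · simp [empiricalMean]
  rw [empiricalMean, norm_smul, norm_inv, Real.norm_natCast, inv_mul_le_iff₀ (by positivity)]
  calc ‖∑ i, ψ (x i)‖ ≤ ∑ i, ‖ψ (x i)‖ := norm_sum_le _ _
    _ ≤ ∑ _i : Fin n, (B : ℝ) := Finset.sum_le_sum fun i _ => hψ _
    _ = n * B := by simp

lemma empiricalMean_update_sub (x : Fin n → α) (i : Fin n) (y : α) :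
    empiricalMean ψ (Function.update x i y) - empiricalMean ψ x
      = (n : ℝ)⁻¹ • (ψ y - ψ (x i)) := by
  rw [empiricalMean, empiricalMean, ← smul_sub, ← Finset.sum_sub_distrib,
    Finset.sum_eq_single i (fun j _ hji => by simp [hji]) (by simp)]
  simp

lemma boundedDifferences_norm_sub_empiricalMean (hψ : ∀ z, ‖ψ z‖ ≤ B) (m : E) :
    BoundedDifferences (fun x : Fin n → α => ‖m - empiricalMean ψ x‖) fun _ => 2 * B / n := by
  intro x i y
  calc |‖m - empiricalMean ψ x‖ - ‖m - empiricalMean ψ (Function.update x i y)‖|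
      ≤ ‖empiricalMean ψ (Function.update x i y) - empiricalMean ψ x‖ := by
        simpa using abs_norm_sub_norm_le (m - empiricalMean ψ x)
          (m - empiricalMean ψ (Function.update x i y))
    _ = (n : ℝ)⁻¹ * ‖ψ y - ψ (x i)‖ := by
        rw [empiricalMean_update_sub, norm_smul, norm_inv, Real.norm_natCast]
    _ ≤ (n : ℝ)⁻¹ * (B + B) := by gcongr; exact norm_sub_le_of_le (hψ y) (hψ _)
    _ = ((2 * B / n : ℝ≥0) : ℝ) := by push_cast; ring

lemma stronglyMeasurable_empiricalMean [MeasurableSpace α] (hψ : StronglyMeasurable ψ) :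
    StronglyMeasurable (empiricalMean ψ : (Fin n → α) → E) :=
  (Finset.stronglyMeasurable_fun_sum _ fun i _ =>
    hψ.comp_measurable (measurable_pi_apply i)).const_smul _

lemma empiricalMean_ae_eq [MeasurableSpace α] {P : Measure α} [IsProbabilityMeasure P]
    {φ : α → E} (h : φ =ᵐ[P] ψ) :
    (empiricalMean φ : (Fin n → α) → E) =ᵐ[Measure.pi fun _ => P] empiricalMean ψ := by
  have hcoord (i : Fin n) : (fun x : Fin n → α => φ (x i)) =ᵐ[Measure.pi fun _ => P]
      fun x => ψ (x i) :=
    ae_eq_comp (measurable_pi_apply i).aemeasurable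
      (by rwa [(measurePreserving_eval (fun _ => P) i).map_eq])
  filter_upwards [ae_all_iff.2 hcoord] with x hx
  simp [empiricalMean, hx]

end NormedSpace

section InnerProductSpace

variable {α H : Type*} [MeasurableSpace α] [NormedAddCommGroup H] [InnerProductSpace ℝ H]
  [CompleteSpace H] {n : ℕ} {ψ : α → H} {B : ℝ≥0}

lemma integral_norm_sub_empiricalMean_sq_le (P : Measure α) [IsProbabilityMeasure P]
    (hψm : StronglyMeasurable ψ) (hψ : ∀ z, ‖ψ z‖ ≤ B) (hn : 0 < n) :
    ∫ x, ‖(∫ z, ψ z ∂P) - empiricalMean ψ x‖ ^ 2 ∂Measure.pi (fun _ : Fin n => P)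
      ≤ (2 * B / √n) ^ 2 := by
  set m := ∫ z, ψ z ∂P
  set Y : α → H := fun z => ψ z - m
  have hψ_int : Integrable ψ P := .of_bound hψm.aestronglyMeasurable B (ae_of_all _ hψ)
  have hm : ‖m‖ ≤ B := by
    simpa using norm_integral_le_of_norm_le_const (μ := P) (ae_of_all _ hψ)
  have hYB (z : α) : ‖Y z‖ ≤ 2 * B := by linarith [norm_sub_le (ψ z) m, hψ z]
  have hY : MemLp Y 2 P :=
    .of_bound (hψm.sub stronglyMeasurable_const).aestronglyMeasurable _ (ae_of_all _ hYB)
  have hY₀ : ∫ z, Y z ∂P = 0 := by simp [Y, integral_sub hψ_int (integrable_const m), m]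
  have hdev (x : Fin n → α) : ‖m - empiricalMean ψ x‖ = (n : ℝ)⁻¹ * ‖∑ i, Y (x i)‖ := by
    have : m - empiricalMean ψ x = -((n : ℝ)⁻¹ • ∑ i, Y (x i)) := by
      simp [Y, empiricalMean, Finset.sum_sub_distrib, smul_sub, ← Nat.cast_smul_eq_nsmul ℝ,
        smul_smul, hn.ne']
    rw [this, norm_neg, norm_smul, norm_inv, Real.norm_natCast]
  calc ∫ x, ‖m - empiricalMean ψ x‖ ^ 2 ∂Measure.pi (fun _ : Fin n => P)
      = (n : ℝ)⁻¹ ^ 2 * ∑ _i : Fin n, ∫ z, ‖Y z‖ ^ 2 ∂P := by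
        simp_rw [hdev, mul_pow]
        rw [integral_const_mul, integral_norm_sum_sq_pi _ (fun _ => hY) fun _ => hY₀]
    _ ≤ (n : ℝ)⁻¹ ^ 2 * ∑ _i : Fin n, (2 * B : ℝ) ^ 2 := by
        gcongr with i
        refine (integral_mono (hY.integrable_norm_pow two_ne_zero) (integrable_const _)
          fun z => pow_le_pow_left₀ (norm_nonneg _) (hYB z) 2).trans_eq (by simp)
    _ = (2 * B / √n) ^ 2 := by
        rw [div_pow, Real.sq_sqrt n.cast_nonneg]; simp; field_simp

lemma integral_norm_sub_empiricalMean_le (P : Measure α) [IsProbabilityMeasure P]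
    (hψm : StronglyMeasurable ψ) (hψ : ∀ z, ‖ψ z‖ ≤ B) (hn : 0 < n) :
    ∫ x, ‖(∫ z, ψ z ∂P) - empiricalMean ψ x‖ ∂Measure.pi (fun _ : Fin n => P)
      ≤ 2 * B / √n := by
  set m := ∫ z, ψ z ∂P
  have hm : ‖m‖ ≤ B := by
    simpa using norm_integral_le_of_norm_le_const (μ := P) (ae_of_all _ hψ)
  have hdev_le (x : Fin n → α) : ‖‖m - empiricalMean ψ x‖‖ ≤ 2 * B := by
    rw [norm_norm, two_mul]
    exact norm_sub_le_of_le hm (norm_empiricalMean_le hψ x)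
  have hdev_memLp : MemLp (fun x => ‖m - empiricalMean ψ x‖) 2 (Measure.pi fun _ : Fin n => P) :=
    .of_bound (stronglyMeasurable_const.sub
      (stronglyMeasurable_empiricalMean hψm)).norm.aestronglyMeasurable _ (ae_of_all _ hdev_le)
  refine (pow_le_pow_iff_left₀ (integral_nonneg fun x => norm_nonneg _) (by positivity)
    two_ne_zero).1 ((sq_integral_le_integral_sq hdev_memLp).trans ?_)
  simpa using integral_norm_sub_empiricalMean_sq_le P hψm hψ hn

theorem measure_norm_sub_empiricalMean_gt_le (P : Measure α) [IsProbabilityMeasure P]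
    (hψm : StronglyMeasurable ψ) (hψ : ∀ z, ‖ψ z‖ ≤ B) (hn : 0 < n) {δ : ℝ} (hδ : 0 ≤ δ) :
    Measure.pi (fun _ : Fin n => P)
        {x | 2 * B / √n * (1 + √(δ / 2)) < ‖(∫ z, ψ z ∂P) - empiricalMean ψ x‖}
      ≤ ENNReal.ofReal (exp (-δ)) := by
  set m := ∫ z, ψ z ∂P
  set F : (Fin n → α) → ℝ := fun x => ‖m - empiricalMean ψ x‖
  -- For `B = 0` the exponent `-2 ε ^ 2 / ∑ i, c i ^ 2` below would divide by zero.
  rcases eq_or_ne B 0 with rfl | hB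
  · have hψ₀ (z : α) : ψ z = 0 := by simpa using hψ z
    simp [hψ₀, empiricalMean, m]
  set ε := 2 * B / √n * √(δ / 2)
  have hsub : {x | 2 * B / √n * (1 + √(δ / 2)) < F x}
      ⊆ {x | ε ≤ F x - ∫ y, F y ∂Measure.pi fun _ => P} := fun x hx => by
    have := integral_norm_sub_empiricalMean_le P hψm hψ hn
    simp only [Set.mem_ofPred_eq, mul_add, mul_one] at hx ⊢
    linarith
  have htail := measureReal_sub_integral_ge_le_of_boundedDifferences (fun _ : Fin n => P)
    (f := F)
    (stronglyMeasurable_const.sub (stronglyMeasurable_empiricalMean hψm)).norm.measurable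
    (boundedDifferences_norm_sub_empiricalMean hψ m) (ε := ε) (by positivity)
  have hexp : -2 * ε ^ 2 / ∑ _i : Fin n, ((2 * B / n : ℝ≥0) : ℝ) ^ 2 = -δ := by
    have hB' : (B : ℝ) ≠ 0 := by exact_mod_cast hB
    have hn' : (n : ℝ) ≠ 0 := by exact_mod_cast hn.ne'
    simp only [Finset.sum_const, Finset.card_univ, Fintype.card_fin, nsmul_eq_mul, ε]
    push_cast
    rw [mul_pow, div_pow, sq_sqrt n.cast_nonneg, sq_sqrt (by positivity)]
    field_simp
  rw [← ofReal_measureReal]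
  exact ENNReal.ofReal_le_ofReal ((measureReal_mono hsub).trans (htail.trans_eq (by rw [hexp])))

end InnerProductSpace

/-- For a bounded kernel with bound `M_k`, if `Z₁,…,Zₙ` are i.i.d. from `P`,
with `μ = E[φ(Z)]` and `μ̂ = (1/n) ∑ᵢ φ(Zᵢ)`, then for all `δ > 0`:
`P(‖μ − μ̂‖ > 2√(M_k/n)(1 + √(δ/2))) ≤ e^{−δ}`. -/
theorem mean_embedding_concentration
    {Zt H Ω : Type*} [NormedAddCommGroup H] [InnerProductSpace ℝ H] [CompleteSpace H]
    [MeasurableSpace Zt] [MeasurableSpace Ω]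
    (μ : Measure Ω) [IsProbabilityMeasure μ]
    (P : Measure Zt) [IsProbabilityMeasure P]
    (φ : Zt → H) (k : Zt → Zt → ℝ) (Mk : ℝ)
    (hrepr : ∀ z z', k z z' = ⟪φ z, φ z'⟫)
    (hbound : ∀ z, k z z ≤ Mk)
    (n : ℕ) (hn : 0 < n)
    (Z : Fin n → Ω → Zt)
    (hZmeas : ∀ i, Measurable (Z i))
    (hZindep : iIndepFun Z μ)
    (hZlaw : ∀ i, Measure.map (Z i) μ = P)
    (hint : Integrable (fun z => φ z) P)
    (δ : ℝ) (hδ : 0 < δ) :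
    μ {ω | ‖(∫ z, φ z ∂P) - (n : ℝ)⁻¹ • ∑ i, φ (Z i ω)‖ >
        2 * Real.sqrt (Mk / n) * (1 + Real.sqrt (δ / 2))} ≤
      ENNReal.ofReal (Real.exp (-δ)) := by
  set B : ℝ≥0 := ⟨√Mk, sqrt_nonneg Mk⟩
  have hφB (z : Zt) : ‖φ z‖ ≤ B :=
    le_sqrt_of_sq_le (by rw [← real_inner_self_eq_norm_sq, ← hrepr]; exact hbound z)
  obtain ⟨ψ, hψm, hφψ : φ =ᵐ[P] ψ, hψB⟩ :=
    hint.aestronglyMeasurable.exists_stronglyMeasurable_ae_eq_forall_norm_le hφB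
  have hlaw : μ.map (fun ω i => Z i ω) = Measure.pi fun _ => P := by
    rw [(iIndepFun_iff_map_fun_eq_pi_map fun i => (hZmeas i).aemeasurable).1 hZindep]
    simp only [hZlaw]
  have hthreshold : 2 * √(Mk / n) * (1 + √(δ / 2)) = 2 * B / √n * (1 + √(δ / 2)) := by
    rw [show (B : ℝ) = √Mk from rfl, sqrt_div' _ n.cast_nonneg]; ring
  calc μ {ω | ‖(∫ z, φ z ∂P) - (n : ℝ)⁻¹ • ∑ i, φ (Z i ω)‖ > 2 * √(Mk / n) * (1 + √(δ / 2))}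
      ≤ Measure.pi (fun _ => P)
          {x | 2 * B / √n * (1 + √(δ / 2)) < ‖(∫ z, φ z ∂P) - empiricalMean φ x‖} := by
        rw [hthreshold, ← hlaw]
        exact Measure.le_map_apply (measurable_pi_lambda _ hZmeas).aemeasurable _
    _ = Measure.pi (fun _ => P)
          {x | 2 * B / √n * (1 + √(δ / 2)) < ‖(∫ z, ψ z ∂P) - empiricalMean ψ x‖} := by
        refine measure_congr ?_
        filter_upwards [empiricalMean_ae_eq hφψ] with x hx
        change (_ < ‖_ - empiricalMean φ x‖) = (_ < ‖_ - empiricalMean ψ x‖)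
        rw [hx, integral_congr_ae hφψ]
    _ ≤ ENNReal.ofReal (exp (-δ)) :=
        measure_norm_sub_empiricalMean_gt_le P hψm hψB hn hδ.le
end
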